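/- Let E ⊂ ℂ be a compact set with connected complement, and let z_1,…,z_N ∈ E be distinct points. Then there exists a constant c > 0 (depending only on E and the points z_1,…,z_N) such that for every f ∈ A(E) and every integer n ≥ N−1 there exists a polynomial p_n ∈ P_n satisfying ‖f − p_n‖_E ≤ c·E_n(f,E) and p_n(z_j) = f(z_j) for j = 1,…,N. -/

import Mathlib

/-- The uniform (sup) norm of `g` on the set `E ⊆ ℂ`. -/
noncomputable def supNorm (E : Set ℂ) (g : ℂ → ℂ) : ℝ :=
  ⨆ z : E, ‖g z‖

/-- `E_n(f,E)`: the error of best uniform approximation of `f` on `E` by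
complex polynomials of degree at most `n`. -/
noncomputable def bestApprox (n : ℕ) (E : Set ℂ) (f : ℂ → ℂ) : ℝ :=
  ⨅ p : {p : Polynomial ℂ // p.natDegree ≤ n},
    supNorm E (fun w => f w - (p : Polynomial ℂ).eval w)

lemma supNorm_nonneg (E : Set ℂ) (g : ℂ → ℂ) : 0 ≤ supNorm E g :=
  Real.iSup_nonneg fun _ => norm_nonneg _

lemma bestApprox_nonneg (n : ℕ) (E : Set ℂ) (f : ℂ → ℂ) : 0 ≤ bestApprox n E f :=
  Real.iInf_nonneg fun _ => supNorm_nonneg _ _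

/-- On a compact set, pointwise values of a continuous function are bounded by the sup norm. -/
lemma abs_le_supNorm {E : Set ℂ} (hE : IsCompact E) {g : ℂ → ℂ} (hg : ContinuousOn g E)
    {w : ℂ} (hw : w ∈ E) : ‖g w‖ ≤ supNorm E g := by
  obtain ⟨C, hC⟩ := hE.exists_bound_of_continuousOn hg
  have hbdd : BddAbove (Set.range fun z : E => ‖g z‖) := by
    refine ⟨C, ?_⟩
    rintro _ ⟨x, rfl⟩
    simpa using hC x x.2
  exact le_ciSup hbdd (⟨w, hw⟩ : E)

/-- Walsh-type simultaneous approximation and interpolation: for `E` compact with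
connected complement and distinct points `z 1, …, z N ∈ E`, there is `c > 0` such
that every `f ∈ A(E)` admits, for each `n ≥ N - 1`, a polynomial `p ∈ P_n` with
`‖f - p‖_E ≤ c ⬝ E_n(f,E)` interpolating `f` at the points `z j`. -/
theorem walsh_simultaneous_approximation_interpolation
    (E : Set ℂ) (hE : IsCompact E) (hEc : IsConnected Eᶜ)
    (N : ℕ) (z : Fin N → ℂ) (hzE : ∀ j, z j ∈ E) (hz : Function.Injective z) :
    ∃ c : ℝ, 0 < c ∧
      ∀ f : ℂ → ℂ, ContinuousOn f E → DifferentiableOn ℂ f (interior E) →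
        ∀ n : ℕ, N - 1 ≤ n →
          ∃ p : Polynomial ℂ, p.natDegree ≤ n ∧
            supNorm E (fun w => f w - p.eval w) ≤ c * bestApprox n E f ∧
            ∀ j, p.eval (z j) = f (z j) := by
  classical
  set ℓ : Fin N → Polynomial ℂ := fun j => Lagrange.basis Finset.univ z j with hℓ
  set L : ℝ := ∑ j, supNorm E (fun w => (ℓ j).eval w) with hL
  have hL0 : 0 ≤ L := Finset.sum_nonneg fun j _ => supNorm_nonneg _ _
  have hℓdeg : ∀ j, (ℓ j).natDegree ≤ N - 1 := fun j => by
    rw [hℓ, Lagrange.natDegree_basis (hz.injOn) (Finset.mem_univ j), Finset.card_univ,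
      Fintype.card_fin]
  refine ⟨2 * (1 + L), by positivity, ?_⟩
  intro f hf _hf' n hn
  have hEn0 : 0 ≤ bestApprox n E f := bestApprox_nonneg n E f
  haveI : Nonempty {p : Polynomial ℂ // p.natDegree ≤ n} :=
    ⟨⟨0, by simp⟩⟩
  rcases eq_or_lt_of_le hEn0 with hEn | hEn
  · -- best approximation error is zero: `f` agrees with a polynomial on `E`
    haveI : CompactSpace E := isCompact_iff_compactSpace.mp hE
    set T := (Polynomial.toContinuousMapOnAlgHom E).toLinearMap with hT
    set S : Submodule ℂ C(E, ℂ) := (Polynomial.degreeLT ℂ (n + 1)).map T with hS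
    haveI : FiniteDimensional ℂ (Polynomial.degreeLT ℂ (n + 1)) :=
      Module.Finite.equiv (Polynomial.degreeLTEquiv ℂ (n + 1)).symm
    haveI : FiniteDimensional ℂ S := Module.Finite.map _ _
    have hSclosed : IsClosed (S : Set C(E, ℂ)) := S.closed_of_finiteDimensional
    set F : C(E, ℂ) := ⟨E.restrict f, hf.restrict⟩ with hF
    have hFS : F ∈ S := by
      have hcl : F ∈ closure (S : Set C(E, ℂ)) := by
        refine Metric.mem_closure_iff.mpr fun ε hε => ?_
        obtain ⟨p, hp⟩ : ∃ p : {p : Polynomial ℂ // p.natDegree ≤ n},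
            supNorm E (fun w => f w - (p : Polynomial ℂ).eval w) < ε :=
          exists_lt_of_ciInf_lt (show bestApprox n E f < ε from hEn ▸ hε)
        refine ⟨T p.1, ⟨p.1, Polynomial.mem_degreeLT.mpr ?_, rfl⟩, ?_⟩
        · calc (p : Polynomial ℂ).degree ≤ (p : Polynomial ℂ).natDegree :=
                Polynomial.degree_le_natDegree
            _ ≤ (n : WithBot ℕ) := by exact_mod_cast p.2
            _ < ((n + 1 : ℕ) : WithBot ℕ) := by exact_mod_cast Nat.lt_succ_self n
        · have hnorm : dist F (T p.1) = ⨆ x : E, ‖(F - T p.1) x‖ := by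
            rw [dist_eq_norm, ContinuousMap.norm_eq_iSup_norm]
          have heq : (fun x : E => ‖(F - T p.1) x‖)
              = fun x : E => ‖f x - (p : Polynomial ℂ).eval (x : ℂ)‖ := by
            funext x
            simp [hF, hT, Polynomial.toContinuousMapOnAlgHom_apply,
              Polynomial.toContinuousMapOn, Polynomial.toContinuousMap, ContinuousMap.coe_mk,
              Set.restrict_apply]
            rfl
          rw [hnorm, heq]
          exact hp
      rwa [hSclosed.closure_eq] at hcl
    obtain ⟨q, hqmem, hqF⟩ := hFS
    have hqdeg : q.natDegree ≤ n := by
      by_cases hq0 : q = 0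
      · simp [hq0]
      · have h1 := Polynomial.mem_degreeLT.mp hqmem
        have h2 := (Polynomial.natDegree_lt_iff_degree_lt hq0).mpr h1
        omega
    have hfq : ∀ w : E, f w = q.eval (w : ℂ) := by
      intro w
      have h := DFunLike.congr_fun hqF w
      simp only [hF, hT, AlgHom.toLinearMap_apply, Polynomial.toContinuousMapOnAlgHom_apply,
        Polynomial.toContinuousMapOn, Polynomial.toContinuousMap, ContinuousMap.coe_mk,
        Set.restrict_apply] at h
      exact h.symm
    refine ⟨q, hqdeg, ?_, fun j => (hfq ⟨z j, hzE j⟩).symm⟩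
    rw [← hEn, mul_zero]
    refine Real.iSup_le (fun w => ?_) le_rfl
    simp [hfq w]
  · -- best approximation error is positive: near-best approximation + Lagrange correction
    obtain ⟨p₀, hp₀⟩ : ∃ p : {p : Polynomial ℂ // p.natDegree ≤ n},
        supNorm E (fun w => f w - (p : Polynomial ℂ).eval w) < 2 * bestApprox n E f :=
      exists_lt_of_ciInf_lt (show bestApprox n E f < 2 * bestApprox n E f by linarith)
    set P : Polynomial ℂ := p₀.1 with hP
    set M : ℝ := supNorm E (fun w => f w - P.eval w) with hM
    have hM0 : 0 ≤ M := supNorm_nonneg _ _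
    have hcont : ContinuousOn (fun w => f w - P.eval w) E :=
      hf.sub (Polynomial.continuous P).continuousOn
    have hptle : ∀ w ∈ E, ‖f w - P.eval w‖ ≤ M := fun w hw =>
      abs_le_supNorm hE hcont hw
    set q : Polynomial ℂ :=
      P + ∑ j, Polynomial.C (f (z j) - P.eval (z j)) * ℓ j with hq
    have hqdeg : q.natDegree ≤ n := by
      refine (Polynomial.natDegree_add_le _ _).trans (max_le p₀.2 ?_)
      refine Polynomial.natDegree_sum_le_of_forall_le _ _ fun j _ => ?_
      exact (Polynomial.natDegree_C_mul_le _ _).trans ((hℓdeg j).trans hn)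
    have hqeval : ∀ j, q.eval (z j) = f (z j) := by
      intro j
      rw [hq, Polynomial.eval_add, Polynomial.eval_finset_sum]
      rw [Finset.sum_eq_single j]
      · simp only [hℓ, Lagrange.eval_basis_self hz.injOn (Finset.mem_univ j), mul_one,
          Polynomial.eval_mul, Polynomial.eval_C]
        ring
      · intro i _ hij
        simp [hℓ, Lagrange.eval_basis_of_ne hij (Finset.mem_univ j)]
      · simp
    refine ⟨q, hqdeg, ?_, hqeval⟩
    have hbound : ∀ w : E, ‖f w - q.eval (w : ℂ)‖ ≤ M * (1 + L) := by
      intro w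
      have h1 : f w - q.eval (w : ℂ)
          = (f w - P.eval (w : ℂ)) - ∑ j, (f (z j) - P.eval (z j)) * (ℓ j).eval (w : ℂ) := by
        simp [hq, Polynomial.eval_add, Polynomial.eval_finset_sum]
        ring
      rw [h1]
      calc ‖(f w - P.eval (w : ℂ)) - ∑ j, (f (z j) - P.eval (z j)) * (ℓ j).eval (w : ℂ)‖
          ≤ ‖f w - P.eval (w : ℂ)‖
            + ‖∑ j, (f (z j) - P.eval (z j)) * (ℓ j).eval (w : ℂ)‖ := by
            exact norm_sub_le _ _
        _ ≤ M + ∑ j, ‖(f (z j) - P.eval (z j)) * (ℓ j).eval (w : ℂ)‖ := by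
            have habs : ‖∑ j, (f (z j) - P.eval (z j)) * (ℓ j).eval (w : ℂ)‖
                ≤ ∑ j, ‖(f (z j) - P.eval (z j)) * (ℓ j).eval (w : ℂ)‖ := by
              simpa using
                norm_sum_le Finset.univ
                  (fun j => (f (z j) - P.eval (z j)) * (ℓ j).eval (w : ℂ))
            exact add_le_add (hptle w w.2) habs
        _ ≤ M + ∑ j, M * supNorm E (fun u => (ℓ j).eval u) := by
            gcongr with j hj
            rw [norm_mul]
            have h2 : ‖f (z j) - P.eval (z j)‖ ≤ M := hptle _ (hzE j)
            have h3 : ‖(ℓ j).eval (w : ℂ)‖ ≤ supNorm E (fun u => (ℓ j).eval u) :=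
              abs_le_supNorm hE (Polynomial.continuous _).continuousOn w.2
            exact mul_le_mul h2 h3 (norm_nonneg _) hM0
        _ = M * (1 + L) := by rw [← Finset.mul_sum, ← hL]; ring
    have hMle : M ≤ 2 * bestApprox n E f := le_of_lt hp₀
    have hstep : M * (1 + L) ≤ 2 * (1 + L) * bestApprox n E f := by nlinarith
    have hc0 : 0 ≤ 2 * (1 + L) * bestApprox n E f := le_trans (by nlinarith) hstep
    exact Real.iSup_le (fun w => (hbound w).trans hstep) hc0
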